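/- arXiv:2601.06819 — 5 statements merged into one kernel-verified Lean document; each statement's English description precedes it below -/
import Mathlib

section
/- Let M = [[A, C],[0, B]] be a nonsingular block upper-triangular integer matrix with A of size r×r and B of size s×s. If the Hermite normal form of M is written in block form as [[H1, *],[0, H2]] with H1 of size r×r, then H1 is the Hermite normal form of A and H2 is the Hermite normal form of B. -/
def IsHNF {n : ℕ} (H : Matrix (Fin n) (Fin n) ℤ) : Prop :=
  (∀ i j : Fin n, j < i → H i j = 0) ∧
  (∀ i : Fin n, 0 < H i i) ∧
  (∀ i j : Fin n, i < j → 0 ≤ H i j ∧ H i j < H j j)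

def IsHNFOf {n : ℕ} (H A : Matrix (Fin n) (Fin n) ℤ) : Prop :=
  IsHNF H ∧ ∃ U : Matrix (Fin n) (Fin n) ℤ, IsUnit U.det ∧ U * A = H

/-- For a nonsingular block upper-triangular matrix, the diagonal blocks of its HNF are
the HNFs of the diagonal blocks. -/
theorem stmt2 {r s : ℕ} (M H : Matrix (Fin (r + s)) (Fin (r + s)) ℤ)
    (hM : M.det ≠ 0)
    (hblock : ∀ (i : Fin s) (j : Fin r), M (Fin.natAdd r i) (Fin.castAdd s j) = 0)
    (hH : IsHNFOf H M) :
    IsHNFOf (H.submatrix (Fin.castAdd s) (Fin.castAdd s))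
            (M.submatrix (Fin.castAdd s) (Fin.castAdd s)) ∧
    IsHNFOf (H.submatrix (Fin.natAdd r) (Fin.natAdd r))
            (M.submatrix (Fin.natAdd r) (Fin.natAdd r)) := by
  obtain ⟨⟨hHlow, hHdiag, hHup⟩, U, hUdet, hUM⟩ := hH
  set e : Fin r ⊕ Fin s ≃ Fin (r + s) := finSumFinEquiv with he
  set M' := M.submatrix e e with hM'def
  set H' := H.submatrix e e with hH'def
  set U' := U.submatrix e e with hU'def
  have hUM' : U' * M' = H' := by
    rw [hU'def, hM'def, hH'def, Matrix.submatrix_mul_equiv, hUM]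
  -- identify the blocks
  have hA : M'.toBlocks₁₁ = M.submatrix (Fin.castAdd s) (Fin.castAdd s) := by
    ext i j; simp [Matrix.toBlocks₁₁, hM'def, he]
  have hB : M'.toBlocks₂₂ = M.submatrix (Fin.natAdd r) (Fin.natAdd r) := by
    ext i j; simp [Matrix.toBlocks₂₂, hM'def, he]
  have hH1 : H'.toBlocks₁₁ = H.submatrix (Fin.castAdd s) (Fin.castAdd s) := by
    ext i j; simp [Matrix.toBlocks₁₁, hH'def, he]
  have hH2 : H'.toBlocks₂₂ = H.submatrix (Fin.natAdd r) (Fin.natAdd r) := by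
    ext i j; simp [Matrix.toBlocks₂₂, hH'def, he]
  have hM21 : M'.toBlocks₂₁ = 0 := by
    ext i j
    simp only [Matrix.toBlocks₂₁, Matrix.of_apply, hM'def, Matrix.submatrix_apply, he,
      finSumFinEquiv_apply_left, finSumFinEquiv_apply_right, Matrix.zero_apply]
    exact hblock i j
  have hH21 : H'.toBlocks₂₁ = 0 := by
    ext i j
    simp only [Matrix.toBlocks₂₁, Matrix.of_apply, hH'def, Matrix.submatrix_apply, he,
      finSumFinEquiv_apply_left, finSumFinEquiv_apply_right, Matrix.zero_apply]
    exact hHlow _ _ (by simp [Fin.lt_def]; omega)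
  -- block multiplication
  have hmul : Matrix.fromBlocks
      (U'.toBlocks₁₁ * M'.toBlocks₁₁ + U'.toBlocks₁₂ * M'.toBlocks₂₁)
      (U'.toBlocks₁₁ * M'.toBlocks₁₂ + U'.toBlocks₁₂ * M'.toBlocks₂₂)
      (U'.toBlocks₂₁ * M'.toBlocks₁₁ + U'.toBlocks₂₂ * M'.toBlocks₂₁)
      (U'.toBlocks₂₁ * M'.toBlocks₁₂ + U'.toBlocks₂₂ * M'.toBlocks₂₂)
      = Matrix.fromBlocks H'.toBlocks₁₁ H'.toBlocks₁₂ H'.toBlocks₂₁ H'.toBlocks₂₂ := by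
    rw [← Matrix.fromBlocks_multiply, Matrix.fromBlocks_toBlocks, Matrix.fromBlocks_toBlocks,
      Matrix.fromBlocks_toBlocks, hUM']
  have h11 : U'.toBlocks₁₁ * M'.toBlocks₁₁ + U'.toBlocks₁₂ * M'.toBlocks₂₁ = H'.toBlocks₁₁ := by
    have := congrArg Matrix.toBlocks₁₁ hmul
    rwa [Matrix.toBlocks_fromBlocks₁₁, Matrix.toBlocks_fromBlocks₁₁] at this
  have h21 : U'.toBlocks₂₁ * M'.toBlocks₁₁ + U'.toBlocks₂₂ * M'.toBlocks₂₁ = H'.toBlocks₂₁ := by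
    have := congrArg Matrix.toBlocks₂₁ hmul
    rwa [Matrix.toBlocks_fromBlocks₂₁, Matrix.toBlocks_fromBlocks₂₁] at this
  have h22 : U'.toBlocks₂₁ * M'.toBlocks₁₂ + U'.toBlocks₂₂ * M'.toBlocks₂₂ = H'.toBlocks₂₂ := by
    have := congrArg Matrix.toBlocks₂₂ hmul
    rwa [Matrix.toBlocks_fromBlocks₂₂, Matrix.toBlocks_fromBlocks₂₂] at this
  rw [hM21, hH21, Matrix.mul_zero, add_zero] at h21
  rw [hM21, Matrix.mul_zero, add_zero] at h11
  -- det of A nonzero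
  have hM'eq : M' = Matrix.fromBlocks M'.toBlocks₁₁ M'.toBlocks₁₂ 0 M'.toBlocks₂₂ := by
    rw [← hM21, Matrix.fromBlocks_toBlocks]
  have hdetM' : M'.det = M'.toBlocks₁₁.det * M'.toBlocks₂₂.det := by
    conv_lhs => rw [hM'eq]
    exact Matrix.det_fromBlocks_zero₂₁ _ _ _
  have hdetM'ne : M'.det ≠ 0 := by
    rw [hM'def, Matrix.det_submatrix_equiv_self]; exact hM
  have hdetA : M'.toBlocks₁₁.det ≠ 0 := fun h => hdetM'ne (by rw [hdetM', h, zero_mul])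
  -- U'.toBlocks₂₁ = 0
  have hU21 : U'.toBlocks₂₁ = 0 := by
    have h := congrArg (· * M'.toBlocks₁₁.adjugate) h21
    simp only [Matrix.mul_assoc, Matrix.mul_adjugate, Matrix.zero_mul] at h
    ext i j
    have := congrFun (congrFun h i) j
    simp only [Matrix.mul_smul, Matrix.mul_one, Matrix.smul_apply, smul_eq_mul,
      Matrix.zero_apply] at this
    exact (mul_eq_zero.mp this).resolve_left hdetA
  rw [hU21, Matrix.zero_mul, zero_add] at h22
  -- det U' splits
  have hU'eq : U' = Matrix.fromBlocks U'.toBlocks₁₁ U'.toBlocks₁₂ 0 U'.toBlocks₂₂ := by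
    rw [← hU21, Matrix.fromBlocks_toBlocks]
  have hdetU' : IsUnit U'.det := by
    rw [hU'def, Matrix.det_submatrix_equiv_self]; exact hUdet
  have hdetsplit : U'.det = U'.toBlocks₁₁.det * U'.toBlocks₂₂.det := by
    conv_lhs => rw [hU'eq]
    exact Matrix.det_fromBlocks_zero₂₁ _ _ _
  rw [hdetsplit] at hdetU'
  have hdetU1 : IsUnit U'.toBlocks₁₁.det := isUnit_of_mul_isUnit_left hdetU'
  have hdetU2 : IsUnit U'.toBlocks₂₂.det := isUnit_of_mul_isUnit_right hdetU'
  constructor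
  · refine ⟨⟨?_, ?_, ?_⟩, U'.toBlocks₁₁, hdetU1, ?_⟩
    · intro i j hij
      exact hHlow _ _ (by simp only [Fin.lt_def, Fin.coe_castAdd] at hij ⊢; omega)
    · intro i; exact hHdiag _
    · intro i j hij
      exact hHup _ _ (by simp only [Fin.lt_def, Fin.coe_castAdd] at hij ⊢; omega)
    · rw [← hA, ← hH1, h11]
  · refine ⟨⟨?_, ?_, ?_⟩, U'.toBlocks₂₂, hdetU2, ?_⟩
    · intro i j hij
      exact hHlow _ _ (by simp only [Fin.lt_def, Fin.coe_natAdd] at hij ⊢; omega)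
    · intro i; exact hHdiag _
    · intro i j hij
      exact hHup _ _ (by simp only [Fin.lt_def, Fin.coe_natAdd] at hij ⊢; omega)
    · rw [← hB, ← hH2, h22]
end

section
/- Let C_1 = [[A_1, A_2],[0, I_{n-d}]] and D_1 = [[B_1, B_2],[0, I_{n-d}]] be n×n integer matrices, where A_1 and B_1 are nonsingular d×d integer matrices and A_2, B_2 are arbitrary integer matrices of appropriate sizes. Then A_1 is unimodular-permutation equivalent to B_1 if and only if C_1 is unimodular-permutation equivalent to D_1. -/
/-!
For nonsingular `X`, `UPEquiv X Y` says that the row lattice `L(X)` equals `L(Y)` with its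
coordinates permuted. The row lattice of `[[A, A₂], [0, I]]` consists of the vectors whose first
`d` coordinates lie in `L(A)`, whatever `A₂` is. Call a coordinate `k` full for a lattice if the
unit vector `e_k` lies in it. A coordinate permutation carrying one lattice onto another carries
non-full coordinates to non-full ones, and for the block lattices these all lie among the first `d`
coordinates. Hence a permutation matching the block lattices restricts to a bijection between the
non-full coordinates of `L(A₁)` and `L(B₁)`; extended arbitrarily over the full coordinates it
matches `L(A₁)` with `L(B₁)`, since changing a lattice vector in full coordinates keeps it in the
lattice.
-/

/-- Unimodular-permutation equivalence of square integer matrices: `U X = Y P_σ`. -/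
def UPEquiv {ι : Type*} [Fintype ι] [DecidableEq ι] (X Y : Matrix ι ι ℤ) : Prop :=
  ∃ U : Matrix ι ι ℤ, IsUnit U.det ∧ ∃ σ : Equiv.Perm ι, U * X = Y.submatrix id ⇑σ

open Matrix LinearEquiv

namespace Matrix

variable {R : Type*} [CommRing R] {l m n : Type*}

def rowSpan (X : Matrix m n R) : Submodule R (n → R) := Submodule.span R (Set.range X)

theorem rowSpan_submatrix_id (Y : Matrix m n R) (σ : Equiv.Perm n) :
    rowSpan (Y.submatrix id σ) = (rowSpan Y).map (funCongrLeft R R σ).toLinearMap := by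
  rw [rowSpan, rowSpan, Submodule.map_span]
  exact congrArg _ (Set.range_comp (funCongrLeft R R σ) Y)

variable [Fintype m]

theorem rowSpan_mul_le [Fintype l] (U : Matrix l m R) (X : Matrix m n R) :
    rowSpan (U * X) ≤ rowSpan X := by
  rw [rowSpan, Submodule.span_le]
  rintro - ⟨i, rfl⟩
  rw [mul_apply_eq_vecMul, vecMul_eq_sum]
  exact Submodule.sum_smul_mem _ _ fun k _ => Submodule.subset_span ⟨k, rfl⟩

theorem exists_mul_eq_of_rowSpan_le {X : Matrix m n R} {Y : Matrix l n R}
    (h : rowSpan Y ≤ rowSpan X) : ∃ U : Matrix l m R, U * X = Y := by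
  choose c hc using fun i =>
    (Submodule.mem_span_range_iff_exists_fun R).1 (h (Submodule.subset_span ⟨i, rfl⟩))
  exact ⟨Matrix.of c, funext fun i => by rw [mul_apply_eq_vecMul, vecMul_eq_sum, ← hc i]; rfl⟩

variable [DecidableEq m]

theorem rowSpan_mul_of_isUnit_det {U : Matrix m m R} (hU : IsUnit U.det) (X : Matrix m n R) :
    rowSpan (U * X) = rowSpan X := by
  refine (rowSpan_mul_le U X).antisymm ?_
  calc rowSpan X = rowSpan (U⁻¹ * (U * X)) := by
        rw [← Matrix.mul_assoc, nonsing_inv_mul U hU, Matrix.one_mul]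
    _ ≤ rowSpan (U * X) := rowSpan_mul_le _ _

theorem eq_one_of_mul_eq_self [IsDomain R] {W X : Matrix m m R} (hX : X.det ≠ 0)
    (h : W * X = X) : W = 1 := by
  have h' : W * (X * X.adjugate) = X * X.adjugate := by rw [← Matrix.mul_assoc, h]
  rw [mul_adjugate, Matrix.mul_smul, Matrix.mul_one] at h'
  exact smul_right_injective _ hX h'

theorem rowSpan_eq_iff_exists_isUnit_det [IsDomain R] {X Y : Matrix m m R} (hX : X.det ≠ 0) :
    rowSpan X = rowSpan Y ↔ ∃ U : Matrix m m R, IsUnit U.det ∧ U * X = Y := by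
  refine ⟨fun h => ?_, fun ⟨U, hU, hUX⟩ => hUX ▸ (rowSpan_mul_of_isUnit_det hU X).symm⟩
  obtain ⟨U, hU⟩ := exists_mul_eq_of_rowSpan_le h.ge
  obtain ⟨V, hV⟩ := exists_mul_eq_of_rowSpan_le h.le
  have hVU : V * U = 1 := eq_one_of_mul_eq_self hX (by rw [Matrix.mul_assoc, hU, hV])
  refine ⟨U, IsUnit.of_mul_eq_one_right V.det ?_, hU⟩
  rw [← det_mul, hVU, det_one]

end Matrix

namespace Submodule

variable {R : Type*} [Ring R] {κ : Type*} [DecidableEq κ]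

def fullCoords (L : Submodule R (κ → R)) : Set κ := {k | Pi.single k 1 ∈ L}

theorem mem_fullCoords_map_funCongrLeft (L : Submodule R (κ → R)) (σ : Equiv.Perm κ) (k : κ) :
    k ∈ (L.map (funCongrLeft R R σ).toLinearMap).fullCoords ↔ σ k ∈ L.fullCoords := by
  have hsingle : funCongrLeft R R σ.symm (Pi.single k 1) = Pi.single (σ k) 1 := by
    ext x
    simp [Pi.single_apply, Equiv.symm_apply_eq]
  simp only [fullCoords, Set.mem_ofPred_eq, mem_map_equiv, funCongrLeft_symm, hsingle]

theorem mem_of_eq_off_fullCoords [Fintype κ] {L : Submodule R (κ → R)} {v w : κ → R}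
    (hv : v ∈ L) (h : ∀ k, v k ≠ w k → k ∈ L.fullCoords) : w ∈ L := by
  have hw : w = v + ∑ k, (w k - v k) • Pi.single k 1 := by
    ext k
    simp [Pi.single_apply]
  rw [hw]
  refine add_mem hv (sum_mem fun k _ => ?_)
  by_cases hk : v k = w k
  · simp [hk]
  · exact smul_mem _ _ (h k hk)

theorem map_funCongrLeft_le [Fintype κ] (L : Submodule R (κ → R)) {σ τ : Equiv.Perm κ}
    (h : ∀ k, σ k ≠ τ k → τ k ∈ L.fullCoords) :
    L.map (funCongrLeft R R σ).toLinearMap ≤ L.map (funCongrLeft R R τ).toLinearMap := by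
  rintro - ⟨v, hv, rfl⟩
  refine mem_of_eq_off_fullCoords (mem_map_of_mem (f := (funCongrLeft R R τ).toLinearMap) hv)
    fun k hk => (mem_fullCoords_map_funCongrLeft L τ k).2 (h k fun hστ => hk ?_)
  simp [hστ]

theorem map_funCongrLeft_eq [Fintype κ] (L : Submodule R (κ → R)) {σ τ : Equiv.Perm κ}
    (h : ∀ k, σ k ≠ τ k → σ k ∈ L.fullCoords ∧ τ k ∈ L.fullCoords) :
    L.map (funCongrLeft R R σ).toLinearMap = L.map (funCongrLeft R R τ).toLinearMap :=
  (map_funCongrLeft_le L fun k hk => (h k hk).2).antisymm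
    (map_funCongrLeft_le L fun k hk => (h k (Ne.symm hk)).1)

end Submodule

section Blocks

open Submodule LinearMap

variable {R : Type*} [Ring R] {ι κ : Type*}

theorem comap_inl_map_funCongrLeft (N : Submodule R (ι → R)) (τ : Equiv.Perm ι) :
    (N.map (funCongrLeft R R τ).toLinearMap).comap (funLeft R R (Sum.inl : ι → ι ⊕ κ)) =
      (N.comap (funLeft R R Sum.inl)).map
        (funCongrLeft R R (τ.sumCongr (Equiv.refl κ))).toLinearMap := by
  ext w
  simp only [mem_comap, mem_map_equiv, funCongrLeft_symm]
  rfl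

variable [DecidableEq ι] [DecidableEq κ]

theorem inl_mem_fullCoords_comap_iff (M : Submodule R (ι → R)) (i : ι) :
    Sum.inl i ∈ (M.comap (funLeft R R (Sum.inl : ι → ι ⊕ κ))).fullCoords ↔
      i ∈ M.fullCoords := by
  have hsingle : (Pi.single (Sum.inl i) 1 : ι ⊕ κ → R) ∘ Sum.inl = Pi.single i 1 := by
    ext
    simp [Pi.single_apply]
  exact Iff.of_eq (congrArg (· ∈ M) hsingle)

theorem inr_mem_fullCoords_comap (M : Submodule R (ι → R)) (j : κ) :
    Sum.inr j ∈ (M.comap (funLeft R R (Sum.inl : ι → ι ⊕ κ))).fullCoords := by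
  have hsingle : (Pi.single (Sum.inr j) 1 : ι ⊕ κ → R) ∘ Sum.inl = 0 := by
    ext
    simp
  exact (congrArg (· ∈ M) hsingle).mpr M.zero_mem

theorem exists_inl_of_not_mem_fullCoords_comap {M : Submodule R (ι → R)} {k : ι ⊕ κ}
    (hk : k ∉ (M.comap (funLeft R R (Sum.inl : ι → ι ⊕ κ))).fullCoords) :
    ∃ i ∉ M.fullCoords, k = Sum.inl i := by
  rcases k with i | j
  · exact ⟨i, (inl_mem_fullCoords_comap_iff M i).not.1 hk, rfl⟩
  · exact absurd (inr_mem_fullCoords_comap M j) hk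

theorem exists_perm_of_fullCoords_comap_inl [Finite ι] {M N : Submodule R (ι → R)}
    {σ : Equiv.Perm (ι ⊕ κ)}
    (hσ : ∀ k, k ∈ (M.comap (funLeft R R Sum.inl)).fullCoords ↔
      σ k ∈ (N.comap (funLeft R R Sum.inl)).fullCoords) :
    ∃ τ : Equiv.Perm ι, (∀ i ∉ M.fullCoords, σ (Sum.inl i) = Sum.inl (τ i)) ∧
      ∀ i ∈ M.fullCoords, τ i ∈ N.fullCoords := by
  classical
  have hmaps : ∀ i : {i // i ∉ M.fullCoords}, ∃ j : {j // j ∉ N.fullCoords},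
      σ (Sum.inl i) = Sum.inl j.1 := by
    rintro ⟨i, hi⟩
    obtain ⟨j, hj, hσj⟩ := exists_inl_of_not_mem_fullCoords_comap
      ((hσ _).not.1 ((inl_mem_fullCoords_comap_iff M i).not.2 hi))
    exact ⟨⟨j, hj⟩, hσj⟩
  choose f hf using hmaps
  have hf_inj : Function.Injective f := fun a b hab =>
    Subtype.ext (Sum.inl_injective (σ.injective (by rw [hf, hf, hab])))
  have hf_surj : Function.Surjective f := by
    rintro ⟨j, hj⟩
    obtain ⟨i, hi, hσi⟩ :=
      exists_inl_of_not_mem_fullCoords_comap (M := M) (k := σ.symm (.inl j))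
      (by rwa [hσ, σ.apply_symm_apply, inl_mem_fullCoords_comap_iff])
    refine ⟨⟨i, hi⟩, Subtype.ext (Sum.inl_injective (β := κ) ?_)⟩
    rw [← hf, ← hσi, σ.apply_symm_apply]
  set e := Equiv.ofBijective f ⟨hf_inj, hf_surj⟩
  refine ⟨e.extendSubtype, fun i hi => ?_, fun i hi => ?_⟩
  · rw [e.extendSubtype_apply_of_mem i hi]
    exact hf ⟨i, hi⟩
  · exact not_not.1 (e.extendSubtype_not_mem i (not_not.2 hi))

theorem exists_perm_of_comap_inl_eq_map [Fintype ι] [Fintype κ] {M N : Submodule R (ι → R)}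
    {σ : Equiv.Perm (ι ⊕ κ)}
    (h : M.comap (funLeft R R Sum.inl) =
      (N.comap (funLeft R R Sum.inl)).map (funCongrLeft R R σ).toLinearMap) :
    ∃ τ : Equiv.Perm ι, M = N.map (funCongrLeft R R τ).toLinearMap := by
  have hfull := fun k => h ▸ mem_fullCoords_map_funCongrLeft (N.comap (funLeft R R Sum.inl)) σ k
  obtain ⟨τ, hτ, hτ_full⟩ := exists_perm_of_fullCoords_comap_inl hfull
  refine ⟨τ, comap_injective_of_surjective
    (funLeft_surjective_of_injective _ _ _ (Sum.inl_injective (β := κ))) ?_⟩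
  rw [comap_inl_map_funCongrLeft, h]
  refine map_funCongrLeft_eq _ ?_
  rintro (i | j) hne
  · have hi : i ∈ M.fullCoords := by_contra fun hi => hne (hτ i hi)
    exact ⟨(hfull _).1 ((inl_mem_fullCoords_comap_iff M i).2 hi),
      (inl_mem_fullCoords_comap_iff N _).2 (hτ_full i hi)⟩
  · exact ⟨(hfull _).1 (inr_mem_fullCoords_comap M j), inr_mem_fullCoords_comap N j⟩

theorem exists_perm_iff_comap_inl [Fintype ι] [Fintype κ] (M N : Submodule R (ι → R)) :
    (∃ τ : Equiv.Perm ι, M = N.map (funCongrLeft R R τ).toLinearMap) ↔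
      ∃ σ : Equiv.Perm (ι ⊕ κ), M.comap (funLeft R R Sum.inl) =
        (N.comap (funLeft R R Sum.inl)).map (funCongrLeft R R σ).toLinearMap :=
  ⟨fun ⟨τ, hτ⟩ => ⟨τ.sumCongr (.refl κ), by rw [hτ, comap_inl_map_funCongrLeft]⟩,
    fun ⟨_, hσ⟩ => exists_perm_of_comap_inl_eq_map hσ⟩

end Blocks

theorem Matrix.rowSpan_fromBlocks_zero_one {R : Type*} [CommRing R] {ι κ : Type*} [Fintype ι]
    [Fintype κ] [DecidableEq ι] [DecidableEq κ] (A : Matrix ι ι R) (A₂ : Matrix ι κ R) :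
    rowSpan (fromBlocks A A₂ (0 : Matrix κ ι R) 1) =
      (rowSpan A).comap (LinearMap.funLeft R R Sum.inl) := by
  set C := fromBlocks A A₂ (0 : Matrix κ ι R) 1 with hC
  refine le_antisymm ?_ fun v hv => ?_
  · rw [rowSpan, Submodule.span_le]
    rintro - ⟨i | j, rfl⟩
    · exact Submodule.subset_span ⟨i, rfl⟩
    · exact (rowSpan A).zero_mem
  · obtain ⟨c, hc⟩ := (Submodule.mem_span_range_iff_exists_fun R).1 hv
    have hw : ∑ i, c i • C (Sum.inl i) ∈ rowSpan C :=
      Submodule.sum_smul_mem _ _ fun i _ => Submodule.subset_span ⟨Sum.inl i, rfl⟩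
    refine Submodule.mem_of_eq_off_fullCoords hw ?_
    rintro (i | j) hne
    · refine absurd ?_ hne
      simpa [hC] using congrFun hc i
    · refine Submodule.subset_span ⟨Sum.inr j, ?_⟩
      ext (i | j')
      · simp [hC]
      · simp [hC, one_apply, Pi.single_apply, eq_comm]

theorem upEquiv_iff_exists_perm {ι : Type*} [Fintype ι] [DecidableEq ι]
    {X Y : Matrix ι ι ℤ} (hX : X.det ≠ 0) :
    UPEquiv X Y ↔
      ∃ σ : Equiv.Perm ι, rowSpan X = (rowSpan Y).map (funCongrLeft ℤ ℤ σ).toLinearMap := by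
  simp only [UPEquiv, ← rowSpan_submatrix_id, rowSpan_eq_iff_exists_isUnit_det hX,
    ← exists_and_left]
  exact exists_comm

theorem stmt6_general {d m : ℕ}
    (A₁ B₁ : Matrix (Fin d) (Fin d) ℤ) (A₂ B₂ : Matrix (Fin d) (Fin m) ℤ)
    (hA : A₁.det ≠ 0) :
    UPEquiv A₁ B₁ ↔
      UPEquiv (Matrix.fromBlocks A₁ A₂ (0 : Matrix (Fin m) (Fin d) ℤ) (1 : Matrix (Fin m) (Fin m) ℤ))
              (Matrix.fromBlocks B₁ B₂ (0 : Matrix (Fin m) (Fin d) ℤ) (1 : Matrix (Fin m) (Fin m) ℤ)) := by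
  have hC : (fromBlocks A₁ A₂ (0 : Matrix (Fin m) (Fin d) ℤ) 1).det ≠ 0 := by
    simpa [det_fromBlocks_zero₂₁] using hA
  rw [upEquiv_iff_exists_perm hA, upEquiv_iff_exists_perm hC, rowSpan_fromBlocks_zero_one,
    rowSpan_fromBlocks_zero_one]
  exact exists_perm_iff_comap_inl _ _

/-- `A₁ ≃_UP B₁` iff `[[A₁,A₂],[0,I]] ≃_UP [[B₁,B₂],[0,I]]` for nonsingular `A₁, B₁`. -/
theorem stmt6 {d m : ℕ}
    (A₁ B₁ : Matrix (Fin d) (Fin d) ℤ) (A₂ B₂ : Matrix (Fin d) (Fin m) ℤ)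
    (hA : A₁.det ≠ 0) (hB : B₁.det ≠ 0) :
    UPEquiv A₁ B₁ ↔
      UPEquiv (Matrix.fromBlocks A₁ A₂ (0 : Matrix (Fin m) (Fin d) ℤ) (1 : Matrix (Fin m) (Fin m) ℤ))
              (Matrix.fromBlocks B₁ B₂ (0 : Matrix (Fin m) (Fin d) ℤ) (1 : Matrix (Fin m) (Fin m) ℤ)) :=
  stmt6_general A₁ B₁ A₂ B₂ hA
end

section
/- Let Q_{d,1} = conv(A) and Q_{d,2} = conv(B) be full-dimensional integral d-simplices in R^d with vertex matrices A, B ∈ Z^{d×(d+1)}. For n > d, let Q^n_{d,1} = conv(C) and Q^n_{d,2} = conv(D) be the n-dimensional pyramids obtained by adjoining the standard basis vectors e_{d+1}, ..., e_n, so C = [[A, 0],[0, I_{n-d}]] and D = [[B, 0],[0, I_{n-d}]] (viewed in Z^{n×(n+1)}). Then Q_{d,1} and Q_{d,2} are unimodularly equivalent in R^d if and only if Q^n_{d,1} and Q^n_{d,2} are unimodularly equivalent in R^n. -/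
/-!
The vertices of a simplex are the extreme points of its convex hull, so a unimodular map between
two simplices is a bijection of vertices given by an integral affine map. Going up, such a map
`x ↦ V x + b` extends to the pyramids by the block matrix `[[V, -b 1ᵀ], [0, 1]]`, which fixes the
apexes. Going down, a map of pyramids may exchange base vertices and apexes; composing it with
the inclusion of the base and with an integral projection that collapses every apex onto a
well-chosen base vertex gives an integral affine bijection between the vertices of the two bases.
Doing this in both directions and composing, we get an integral affine map `N` permuting the
vertices of a full-dimensional simplex; in homogeneous coordinates `det N` times the (nonzero)
determinant of the simplex is ± that determinant, so `N`, and with it each factor, is unimodular.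
-/

/-- Cast an integer point to a real point. -/
def toPt {ι : Type*} (v : ι → ℤ) : ι → ℝ := fun i => (v i : ℝ)

/-- Unimodular equivalence of subsets of `ℝ^ι`: one maps onto the other under an affine
map `x ↦ V x + b` with `V ∈ GL(ℤ)` and `b` integral. -/
def USimEquiv {ι : Type*} [Fintype ι] [DecidableEq ι] (P Q : Set (ι → ℝ)) : Prop :=
  ∃ (V : Matrix ι ι ℤ) (b : ι → ℤ), IsUnit V.det ∧
    (fun x : ι → ℝ => (V.map (Int.cast : ℤ → ℝ)).mulVec x + toPt b) '' P = Q

open Set Matrix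

section ConvexGeometry

variable {𝕜 E ι : Type*} [Field 𝕜] [LinearOrder 𝕜] [IsStrictOrderedRing 𝕜]
  [AddCommGroup E] [Module 𝕜 E]

theorem convexHull_range_eq_image_stdSimplex [Fintype ι] (p : ι → E) :
    convexHull 𝕜 (range p) = Fintype.linearCombination 𝕜 p '' stdSimplex 𝕜 ι := by
  classical
  rw [← convexHull_rangle_single_eq_stdSimplex, LinearMap.image_convexHull, ← range_comp]
  congr 1
  ext i
  simp [Fintype.linearCombination_apply, Pi.single_apply]

theorem AffineIndependent.extremePoints_convexHull_range [Fintype ι] {p : ι → E}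
    (hp : AffineIndependent 𝕜 p) : (convexHull 𝕜 (range p)).extremePoints 𝕜 = range p := by
  classical
  refine extremePoints_convexHull_subset.antisymm ?_
  rintro _ ⟨j, rfl⟩
  refine mem_extremePoints_iff_left.2 ⟨subset_convexHull 𝕜 _ (mem_range_self j), ?_⟩
  simp only [convexHull_range_eq_image_stdSimplex, forall_mem_image]
  rintro w ⟨hw₀, hw₁⟩ v ⟨hv₀, hv₁⟩ ⟨a, b, ha, hb, hab, hj⟩
  simp only [Fintype.linearCombination_apply] at hj ⊢
  have hsum : ∀ i, a * w i + b * v i = (Pi.single j 1 : ι → 𝕜) i := by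
    refine fun i ↦ hp.eq_of_sum_eq_sum (s := Finset.univ) (w₁ := fun i ↦ a * w i + b * v i)
      (w₂ := Pi.single j 1) ?_ ?_ i (Finset.mem_univ i)
    · simp [Finset.sum_add_distrib, ← Finset.mul_sum, hw₁, hv₁, hab]
    · simp [add_smul, mul_smul, Finset.sum_add_distrib, ← Finset.smul_sum, hj, Pi.single_apply]
  have hw : w = Pi.single j 1 := by
    have hzero : ∀ i ≠ j, w i = 0 := fun i hi ↦ by
      have := hsum i
      rw [Pi.single_eq_of_ne hi] at this
      nlinarith [hw₀ i, hv₀ i, mul_nonneg hb.le (hv₀ i)]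
    ext i
    rcases eq_or_ne i j with rfl | hi
    · rw [← hw₁, Finset.sum_eq_single i (fun k _ hk ↦ hzero k hk) (by simp), Pi.single_eq_same]
    · rw [hzero i hi, Pi.single_eq_of_ne hi]
  simp [hw, Pi.single_apply]

theorem AffineEquiv.image_extremePoints {F : Type*} [AddCommGroup F] [Module 𝕜 F]
    (f : E ≃ᵃ[𝕜] F) (s : Set E) :
    f '' s.extremePoints 𝕜 = (f '' s).extremePoints 𝕜 := by
  ext b
  obtain ⟨a, rfl⟩ := f.surjective b
  have : ∀ x y, f '' openSegment 𝕜 x y = openSegment 𝕜 (f x) (f y) :=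
    image_openSegment _ f.toAffineMap
  simp only [mem_extremePoints, f.surjective.forall, f.injective.mem_set_image, f.injective.eq_iff,
    ← this]

end ConvexGeometry

def MapsColumns {R ι ι' κ κ' : Type*} [Semiring R] [Fintype ι] (V : Matrix ι' ι R) (b : ι' → R)
    (σ : κ → κ') (P : Matrix ι κ R) (Q : Matrix ι' κ' R) : Prop :=
  ∀ j, V *ᵥ (fun i ↦ P i j) + b = fun i ↦ Q i (σ j)

namespace MapsColumns

variable {R ι ι' ι'' κ κ' κ'' : Type*} [CommRing R] [Fintype ι] [Fintype ι']

theorem comp {V₁ : Matrix ι' ι R} {b₁ : ι' → R} {σ₁ : κ → κ'} {V₂ : Matrix ι'' ι' R}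
    {b₂ : ι'' → R} {σ₂ : κ' → κ''} {P : Matrix ι κ R} {Q : Matrix ι' κ' R} {S : Matrix ι'' κ'' R}
    (h₁ : MapsColumns V₁ b₁ σ₁ P Q) (h₂ : MapsColumns V₂ b₂ σ₂ Q S) :
    MapsColumns (V₂ * V₁) (V₂ *ᵥ b₁ + b₂) (σ₂ ∘ σ₁) P S := fun j ↦ by
  rw [Function.comp_apply, ← h₂, ← h₁, mulVec_add, mulVec_mulVec, add_assoc]

theorem symm [DecidableEq ι] {V : Matrix ι ι R} {b : ι → R} {σ : κ ≃ κ'} {P : Matrix ι κ R}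
    {Q : Matrix ι κ' R} (h : MapsColumns V b σ P Q) (hV : IsUnit V.det) :
    MapsColumns V⁻¹ (-(V⁻¹ *ᵥ b)) σ.symm Q P := fun j ↦ by
  rw [← σ.apply_symm_apply j, ← h, σ.symm_apply_apply, mulVec_add, mulVec_mulVec,
    nonsing_inv_mul _ hV, one_mulVec, add_neg_cancel_right]

end MapsColumns

section Homogeneous

variable {R κ κ' : Type*} [CommRing R] {d : ℕ}

def homogenize (P : Matrix (Fin d) κ R) : Matrix (Fin (d + 1)) κ R :=
  of fun i j ↦ vecCons 1 (P · j) i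

/-- The matrix `[[1, 0], [b, V]]` of `x ↦ V x + b` in homogeneous coordinates. -/
def homogenizeAffine (V : Matrix (Fin d) (Fin d) R) (b : Fin d → R) :
    Matrix (Fin (d + 1)) (Fin (d + 1)) R :=
  of fun i k ↦ vecCons (vecCons 1 0 k) (fun i ↦ vecCons (b i) (V i) k) i

theorem det_homogenizeAffine (V : Matrix (Fin d) (Fin d) R) (b : Fin d → R) :
    (homogenizeAffine V b).det = V.det := by
  rw [det_succ_row_zero, Fin.sum_univ_succ]
  simp [homogenizeAffine]
  rfl

theorem MapsColumns.homogenizeAffine_mul {V : Matrix (Fin d) (Fin d) R} {b : Fin d → R}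
    {σ : κ → κ'} {P : Matrix (Fin d) κ R} {Q : Matrix (Fin d) κ' R}
    (h : MapsColumns V b σ P Q) :
    homogenizeAffine V b * homogenize P = (homogenize Q).submatrix id σ := by
  ext i j
  refine Fin.cases ?_ (fun i ↦ ?_) i
  · simp [homogenizeAffine, homogenize, mul_apply, Fin.sum_univ_succ]
  · have := congrFun (h j) i
    simp [homogenizeAffine, homogenize, mul_apply, Fin.sum_univ_succ, mulVec, dotProduct] at this ⊢
    linear_combination this

theorem homogenize_map {S : Type*} [CommRing S] (f : R →+* S) (P : Matrix (Fin d) κ R) :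
    (homogenize P).map f = homogenize (P.map f) := by
  ext i j
  refine Fin.cases ?_ (fun i ↦ ?_) i <;> simp [homogenize]

theorem AffineIndependent.det_homogenize_ne_zero {k : Type*} [Field k]
    {P : Matrix (Fin d) (Fin (d + 1)) k} (hP : AffineIndependent k fun j i ↦ P i j) :
    (homogenize P).det ≠ 0 := by
  intro hdet
  obtain ⟨w, hw, hPw⟩ := exists_mulVec_eq_zero_iff.2 hdet
  refine hw (funext fun j ↦
    hP.eq_zero_of_sum_eq_zero (s := Finset.univ) ?_ ?_ j (Finset.mem_univ j))
  · simpa [homogenize, mulVec, dotProduct] using congrFun hPw 0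
  · ext i
    simpa [homogenize, mulVec, dotProduct, mul_comm] using congrFun hPw i.succ

theorem MapsColumns.isUnit_det {P : Matrix (Fin d) (Fin (d + 1)) ℤ} {N : Matrix (Fin d) (Fin d) ℤ}
    {e : Fin d → ℤ} {ρ : Fin (d + 1) → Fin (d + 1)}
    (hP : AffineIndependent ℝ fun j ↦ toPt fun i ↦ P i j) (hρ : ρ.Bijective)
    (h : MapsColumns N e ρ P P) : IsUnit N.det := by
  have hdet := congrArg det h.homogenizeAffine_mul
  rw [det_mul, det_homogenizeAffine, show (homogenize P).submatrix id ρ =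
    (homogenize P).submatrix id (Equiv.ofBijective ρ hρ) from rfl, det_permute'] at hdet
  have hP₀ : (homogenize P).det ≠ 0 := fun h₀ ↦
    AffineIndependent.det_homogenize_ne_zero (P := P.map (Int.castRingHom ℝ)) hP (by
      rw [← homogenize_map, ← RingHom.mapMatrix_apply, ← RingHom.map_det, h₀, map_zero])
  rw [mul_left_injective₀ hP₀ hdet]
  simp

end Homogeneous

section IntegralAffineMaps

theorem toPt_injective {ι : Type*} : Function.Injective (toPt (ι := ι)) :=
  fun _ _ h ↦ funext fun i ↦ Int.cast_injective (congrFun h i)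

variable {ι : Type*} [Fintype ι] [DecidableEq ι]

theorem isUnit_det_map_intCast {V : Matrix ι ι ℤ} (hV : IsUnit V.det) :
    IsUnit (V.map (Int.cast : ℤ → ℝ)).det := by
  have h := (Int.castRingHom ℝ).map_det V
  rw [RingHom.mapMatrix_apply] at h
  exact h ▸ hV.map _

noncomputable def intAffineEquiv (V : Matrix ι ι ℤ) (b : ι → ℤ) (hV : IsUnit V.det) :
    (ι → ℝ) ≃ᵃ[ℝ] (ι → ℝ) :=
  ((V.map Int.cast).toLinearEquiv'
    (invertibleOfIsUnitDet _ (isUnit_det_map_intCast hV))).toAffineEquiv.trans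
    (AffineEquiv.constVAdd ℝ (ι → ℝ) (toPt b))

theorem coe_intAffineEquiv (V : Matrix ι ι ℤ) (b : ι → ℤ) (hV : IsUnit V.det) :
    ⇑(intAffineEquiv V b hV) = fun x ↦ V.map (Int.cast : ℤ → ℝ) *ᵥ x + toPt b := by
  ext x : 1
  simp only [intAffineEquiv, AffineEquiv.coe_trans, Function.comp_apply,
    LinearEquiv.coe_toAffineEquiv, AffineEquiv.constVAdd_apply, vadd_eq_add]
  rw [← LinearEquiv.coe_coe, Matrix.toLinearEquiv'_apply, Matrix.toLin'_apply, add_comm]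

theorem intAffineEquiv_toPt (V : Matrix ι ι ℤ) (b v : ι → ℤ) (hV : IsUnit V.det) :
    intAffineEquiv V b hV (toPt v) = toPt (V *ᵥ v + b) := by
  ext i
  simp [coe_intAffineEquiv, toPt, mulVec, dotProduct]

variable {κ : Type*}

theorem usimEquiv_of_mapsColumns {P Q : Matrix ι κ ℤ} {V : Matrix ι ι ℤ} {b : ι → ℤ} {σ : κ → κ}
    (hV : IsUnit V.det) (hσ : σ.Surjective) (h : MapsColumns V b σ P Q) :
    USimEquiv (convexHull ℝ (range fun j ↦ toPt fun i ↦ P i j))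
      (convexHull ℝ (range fun j ↦ toPt fun i ↦ Q i j)) := by
  refine ⟨V, b, hV, ?_⟩
  rw [← coe_intAffineEquiv V b hV, ← AffineEquiv.coe_toAffineMap, AffineMap.image_convexHull,
    ← range_comp, ← hσ.range_comp (fun j ↦ toPt fun i ↦ Q i j)]
  congr 2
  ext j : 1
  simp [intAffineEquiv_toPt, h j]

theorem USimEquiv.exists_mapsColumns [Fintype κ] {P Q : Matrix ι κ ℤ}
    (hP : AffineIndependent ℝ fun j ↦ toPt fun i ↦ P i j)
    (hQ : AffineIndependent ℝ fun j ↦ toPt fun i ↦ Q i j)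
    (h : USimEquiv (convexHull ℝ (range fun j ↦ toPt fun i ↦ P i j))
      (convexHull ℝ (range fun j ↦ toPt fun i ↦ Q i j))) :
    ∃ (V : Matrix ι ι ℤ) (b : ι → ℤ) (σ : κ ≃ κ), IsUnit V.det ∧ MapsColumns V b σ P Q := by
  obtain ⟨V, b, hV, himage⟩ := h
  rw [← coe_intAffineEquiv V b hV] at himage
  set f := intAffineEquiv V b hV
  have hvert : f '' range (fun j ↦ toPt fun i ↦ P i j) = range fun j ↦ toPt fun i ↦ Q i j := by
    rw [← hP.extremePoints_convexHull_range, f.image_extremePoints, himage,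
      hQ.extremePoints_convexHull_range]
  have hmaps (j : κ) : ∃ k, toPt (fun i ↦ Q i k) = f (toPt fun i ↦ P i j) :=
    hvert.subset (mem_image_of_mem f (mem_range_self j))
  choose σ hσ using hmaps
  have hσ_inj : σ.Injective := fun j j' hjj' ↦
    hP.injective (f.injective (by rw [← hσ, ← hσ, hjj']))
  refine ⟨V, b, .ofBijective σ (Finite.injective_iff_bijective.1 hσ_inj), hV,
    fun j ↦ toPt_injective ?_⟩
  rw [← intAffineEquiv_toPt V b _ hV, Equiv.ofBijective_apply, hσ]

end IntegralAffineMaps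

theorem Equiv.exists_bijective_sumElim_comp_inl {α β : Type*} [Finite α] [Finite β] [Nonempty α]
    (π : α ⊕ β ≃ α ⊕ β) : ∃ g : β → α, (Sum.elim id g ∘ π ∘ Sum.inl).Bijective := by
  classical
  cases nonempty_fintype α
  cases nonempty_fintype β
  set u : Finset (α ⊕ β) := Finset.univ.map (Function.Embedding.inl.trans π.toEmbedding)
  have hu (a : α) : π (.inl a) ∈ u := by simp [u]
  -- `g` matches the apexes hit by `π ∘ inl` with the points of `α` it misses.
  have hcard : Fintype.card u.toRight = Fintype.card ↥(u.toLeft)ᶜ := by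
    have := u.card_toLeft_add_card_toRight
    simp only [Fintype.card_coe, Finset.card_compl, u, Finset.card_map, Finset.card_univ] at this ⊢
    omega
  let e := Fintype.equivOfCardEq hcard
  let g (l : β) : α := if hl : l ∈ u.toRight then e ⟨l, hl⟩ else Classical.arbitrary α
  have hg (l : β) (hl : l ∈ u.toRight) : g l = e ⟨l, hl⟩ := dif_pos hl
  have hg_notMem (l : β) (hl : l ∈ u.toRight) : g l ∉ u.toLeft :=
    hg l hl ▸ Finset.mem_compl.1 (e ⟨l, hl⟩).2
  refine ⟨g, Finite.injective_iff_bijective.1 fun a a' haa' ↦ Sum.inl_injective (π.injective ?_)⟩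
  rcases h : π (.inl a) with i | l <;> rcases h' : π (.inl a') with i' | l' <;>
    simp only [Function.comp_apply, h, h', Sum.elim_inl, Sum.elim_inr, id] at haa'
  · rw [haa']
  · exact absurd (Finset.mem_toLeft.2 (h ▸ hu a))
      (haa' ▸ hg_notMem l' (Finset.mem_toRight.2 (h' ▸ hu a')))
  · exact absurd (Finset.mem_toLeft.2 (h' ▸ hu a'))
      (haa' ▸ hg_notMem l (Finset.mem_toRight.2 (h ▸ hu a)))
  · rw [hg l (Finset.mem_toRight.2 (h ▸ hu a)), hg l' (Finset.mem_toRight.2 (h' ▸ hu a'))] at haa'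
    exact congrArg (Sum.inr ∘ Subtype.val) (e.injective (Subtype.ext haa'))

section Pyramid

variable {R ι κ μ : Type*} [CommRing R] [DecidableEq μ]

def pyramid (P : Matrix ι κ R) (μ : Type*) [DecidableEq μ] : Matrix (ι ⊕ μ) (κ ⊕ μ) R :=
  fromBlocks P 0 0 1

theorem pyramid_col_inl (P : Matrix ι κ R) (j : κ) :
    (fun i ↦ pyramid P μ i (.inl j)) = Sum.elim (fun i ↦ P i j) 0 := by
  ext (i | k) <;> simp [pyramid]

theorem pyramid_col_inr (P : Matrix ι κ R) (l : μ) :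
    (fun i ↦ pyramid P μ i (.inr l)) = Sum.elim (0 : ι → R) (Pi.single l 1) := by
  ext (i | k) <;> simp [pyramid, one_apply, Pi.single_apply]

theorem affineIndependent_pyramid [Fintype κ] [Fintype μ] {k : Type*} [Field k]
    {P : Matrix ι κ k} (hP : AffineIndependent k fun j i ↦ P i j) :
    AffineIndependent k fun x i ↦ pyramid P μ i x := by
  rw [affineIndependent_iff_of_fintype]
  intro w hw₀ hw₁
  rw [Finset.weightedVSub_eq_linear_combination _ hw₀] at hw₁
  have hr (l : μ) : w (.inr l) = 0 := by
    simpa [Fintype.sum_sum_type, pyramid, one_apply] using congrFun hw₁ (.inr l)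
  have hl : ∀ j, w (.inl j) = 0 := fun j ↦
    hP.eq_zero_of_sum_eq_zero (s := Finset.univ)
      (by simpa [Fintype.sum_sum_type, hr] using hw₀)
      (by ext i; simpa [Fintype.sum_sum_type, hr, pyramid] using congrFun hw₁ (.inl i))
      j (Finset.mem_univ j)
  rintro (j | l)
  exacts [hl j, hr l]

theorem affineIndependent_toPt_pyramid [Fintype κ] [Fintype μ] {P : Matrix ι κ ℤ}
    (hP : AffineIndependent ℝ fun j ↦ toPt fun i ↦ P i j) :
    AffineIndependent ℝ fun x ↦ toPt fun i ↦ pyramid P μ i x := by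
  have hcast : (fun x ↦ toPt fun i ↦ pyramid P μ i x) =
      fun x i ↦ pyramid (P.map (Int.cast : ℤ → ℝ)) μ i x := by
    ext (j | l) (i | k) <;> simp [toPt, pyramid, one_apply]
  exact hcast ▸ affineIndependent_pyramid (P := P.map Int.cast) hP

theorem MapsColumns.extend_pyramid [Fintype ι] [DecidableEq ι] [Fintype μ] {V : Matrix ι ι R}
    {b : ι → R} {σ : κ → κ} {P Q : Matrix ι κ R} (h : MapsColumns V b σ P Q) :
    MapsColumns (fromBlocks V (of fun i _ ↦ -b i) 0 1) (Sum.elim b 0) (Sum.map σ id)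
      (pyramid P μ) (pyramid Q μ) := by
  rintro (j | l)
  · rw [Sum.map_inl, pyramid_col_inl, pyramid_col_inl, ← h j]
    simp [fromBlocks_mulVec, ← Sum.elim_add_add]
  · rw [Sum.map_inr, pyramid_col_inr, pyramid_col_inr]
    ext (i | k) <;> simp [Pi.single_apply, one_apply]

theorem mapsColumns_inl_pyramid [Fintype ι] [DecidableEq ι] (P : Matrix ι κ R) :
    MapsColumns (fromRows 1 0) 0 Sum.inl P (pyramid P μ) := by
  intro j
  rw [pyramid_col_inl]
  simp [fromRows_mulVec]

theorem mapsColumns_pyramid_sumElim [Fintype ι] [DecidableEq ι] [Fintype μ] (Q : Matrix ι κ R)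
    (g : μ → κ) :
    MapsColumns (fromCols 1 (of fun i l ↦ Q i (g l))) 0 (Sum.elim id g) (pyramid Q μ) Q := by
  rintro (j | l)
  · rw [pyramid_col_inl]
    simp [fromCols_mulVec]
  · rw [pyramid_col_inr]
    ext i
    simp [mulVec_single]

theorem MapsColumns.exists_of_pyramid [Fintype ι] [DecidableEq ι] [Fintype μ] [Finite κ]
    [Nonempty κ] {W : Matrix (ι ⊕ μ) (ι ⊕ μ) R} {c : ι ⊕ μ → R} {π : κ ⊕ μ ≃ κ ⊕ μ} {P Q : Matrix ι κ R}
    (h : MapsColumns W c π (pyramid P μ) (pyramid Q μ)) :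
    ∃ (V : Matrix ι ι R) (b : ι → R) (τ : κ → κ), τ.Bijective ∧ MapsColumns V b τ P Q := by
  obtain ⟨g, hg⟩ := π.exists_bijective_sumElim_comp_inl
  exact ⟨_, _, _, hg, ((mapsColumns_inl_pyramid P).comp h).comp (mapsColumns_pyramid_sumElim Q g)⟩

end Pyramid

theorem stmt9_general {d m : ℕ}
    (A B : Matrix (Fin d) (Fin (d + 1)) ℤ)
    (hA : AffineIndependent ℝ (fun j : Fin (d + 1) => toPt (fun i => A i j)))
    (hB : AffineIndependent ℝ (fun j : Fin (d + 1) => toPt (fun i => B i j))) :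
    USimEquiv
      (convexHull ℝ (Set.range fun j : Fin (d + 1) => toPt (fun i => A i j)))
      (convexHull ℝ (Set.range fun j : Fin (d + 1) => toPt (fun i => B i j))) ↔
    USimEquiv
      (convexHull ℝ (Set.range fun j : Fin (d + 1) ⊕ Fin m =>
        toPt (fun i => Matrix.fromBlocks A 0 0 (1 : Matrix (Fin m) (Fin m) ℤ) i j)))
      (convexHull ℝ (Set.range fun j : Fin (d + 1) ⊕ Fin m =>
        toPt (fun i => Matrix.fromBlocks B 0 0 (1 : Matrix (Fin m) (Fin m) ℤ) i j))) := by
  constructor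
  · intro h
    obtain ⟨V, b, σ, hV, hσ⟩ := h.exists_mapsColumns hA hB
    have hW : IsUnit (fromBlocks V (of fun i (_ : Fin m) ↦ -b i) 0 1).det := by
      rwa [det_fromBlocks_zero₂₁, det_one, mul_one]
    exact usimEquiv_of_mapsColumns hW (σ.surjective.sumMap Function.surjective_id)
      hσ.extend_pyramid
  · intro h
    obtain ⟨W, c, π, hW, hπ⟩ :=
      h.exists_mapsColumns (affineIndependent_toPt_pyramid hA) (affineIndependent_toPt_pyramid hB)
    obtain ⟨V₁, b₁, τ₁, hτ₁, h₁⟩ := hπ.exists_of_pyramid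
    obtain ⟨V₂, b₂, τ₂, hτ₂, h₂⟩ := (hπ.symm hW).exists_of_pyramid
    have hV₁ : IsUnit V₁.det := by
      have := (h₁.comp h₂).isUnit_det hA (hτ₂.comp hτ₁)
      rw [det_mul] at this
      exact isUnit_of_mul_isUnit_right this
    exact usimEquiv_of_mapsColumns hV₁ hτ₁.2 h₁

/-- Two full-dimensional integral `d`-simplices are unimodularly equivalent iff their
`n`-dimensional pyramids (obtained by adjoining the standard basis vectors
`e_{d+1}, …, e_n`, with `m = n - d > 0`) are unimodularly equivalent. -/
theorem stmt9 {d m : ℕ} (hm : 0 < m)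
    (A B : Matrix (Fin d) (Fin (d + 1)) ℤ)
    (hA : AffineIndependent ℝ (fun j : Fin (d + 1) => toPt (fun i => A i j)))
    (hB : AffineIndependent ℝ (fun j : Fin (d + 1) => toPt (fun i => B i j))) :
    USimEquiv
      (convexHull ℝ (Set.range fun j : Fin (d + 1) => toPt (fun i => A i j)))
      (convexHull ℝ (Set.range fun j : Fin (d + 1) => toPt (fun i => B i j))) ↔
    USimEquiv
      (convexHull ℝ (Set.range fun j : Fin (d + 1) ⊕ Fin m =>
        toPt (fun i => Matrix.fromBlocks A 0 0 (1 : Matrix (Fin m) (Fin m) ℤ) i j)))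
      (convexHull ℝ (Set.range fun j : Fin (d + 1) ⊕ Fin m =>
        toPt (fun i => Matrix.fromBlocks B 0 0 (1 : Matrix (Fin m) (Fin m) ℤ) i j))) :=
  stmt9_general A B hA hB
end

section
/- Let G be a subgroup of S_d and let A, B be nonsingular matrices in Z^{d×d}. Then A ≃_G B if and only if H(A) ≃_G H(B), and also if and only if H(A) = H(B·g) for some g ∈ G, where H denotes Hermite normal form. -/
def GRel {n : ℕ} (G : Subgroup (Equiv.Perm (Fin n)))
    (A B : Matrix (Fin n) (Fin n) ℤ) : Prop :=
  ∃ U : Matrix (Fin n) (Fin n) ℤ, IsUnit U.det ∧ ∃ g ∈ G, U * A = B.submatrix id ⇑g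

namespace Matrix

variable {n R : Type*} [Fintype n] [DecidableEq n] [CommRing R]

def RowEquiv (X Y : Matrix n n R) : Prop :=
  ∃ U : Matrix n n R, IsUnit U.det ∧ U * X = Y

namespace RowEquiv

variable {X Y Z X' Y' : Matrix n n R}

theorem symm (h : RowEquiv X Y) : RowEquiv Y X := by
  obtain ⟨U, hU, rfl⟩ := h
  exact ⟨U⁻¹, isUnit_nonsing_inv_det U hU, by rw [← Matrix.mul_assoc, nonsing_inv_mul U hU,
    Matrix.one_mul]⟩

theorem trans (hXY : RowEquiv X Y) (hYZ : RowEquiv Y Z) : RowEquiv X Z := by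
  obtain ⟨U, hU, rfl⟩ := hXY
  obtain ⟨V, hV, rfl⟩ := hYZ
  exact ⟨V * U, by simpa only [det_mul] using hV.mul hU, Matrix.mul_assoc V U X⟩

theorem congr (hX : RowEquiv X X') (hY : RowEquiv Y Y') :
    RowEquiv X Y ↔ RowEquiv X' Y' :=
  ⟨fun h ↦ hX.symm.trans (h.trans hY), fun h ↦ hX.trans (h.trans hY.symm)⟩

theorem submatrix_id (h : RowEquiv X Y) (g : Equiv.Perm n) :
    RowEquiv (X.submatrix id g) (Y.submatrix id g) := by
  obtain ⟨U, hU, rfl⟩ := h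
  refine ⟨U, hU, ?_⟩
  rw [submatrix_mul U X id (Equiv.refl n) g (Equiv.refl n).bijective]
  rfl

end RowEquiv

end Matrix

open Matrix

theorem IsHNFOf.rowEquiv {n : ℕ} {H A : Matrix (Fin n) (Fin n) ℤ} (h : IsHNFOf H A) :
    RowEquiv A H :=
  h.2

theorem isHNFOf_iff_rowEquiv {n : ℕ} {H A : Matrix (Fin n) (Fin n) ℤ} (hH : IsHNF H) :
    IsHNFOf H A ↔ RowEquiv A H :=
  and_iff_right hH

theorem gRel_iff_exists_rowEquiv {n : ℕ} (G : Subgroup (Equiv.Perm (Fin n)))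
    (A B : Matrix (Fin n) (Fin n) ℤ) :
    GRel G A B ↔ ∃ g ∈ G, RowEquiv A (B.submatrix id g) := by
  unfold GRel RowEquiv
  grind

theorem stmt10_general {d : ℕ} (G : Subgroup (Equiv.Perm (Fin d)))
    (A B HA HB : Matrix (Fin d) (Fin d) ℤ)
    (hHA : IsHNFOf HA A) (hHB : IsHNFOf HB B) :
    (GRel G A B ↔ GRel G HA HB) ∧
    (GRel G A B ↔ ∃ g ∈ G, IsHNFOf HA (B.submatrix id ⇑g)) := by
  simp only [gRel_iff_exists_rowEquiv, isHNFOf_iff_rowEquiv hHA.1]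
  have hA := hHA.rowEquiv
  constructor
  · exact exists_congr fun g ↦ and_congr_right fun _ ↦ hA.congr (hHB.rowEquiv.submatrix_id g)
  · exact exists_congr fun g ↦ and_congr_right fun _ ↦
      ⟨fun h ↦ h.symm.trans hA, fun h ↦ hA.trans h.symm⟩

/-- `A ≃_G B` iff `H(A) ≃_G H(B)` iff `H(A) = H(B ⋅ g)` for some `g ∈ G`. -/
theorem stmt10 {d : ℕ} (G : Subgroup (Equiv.Perm (Fin d)))
    (A B HA HB : Matrix (Fin d) (Fin d) ℤ)
    (hA : A.det ≠ 0) (hB : B.det ≠ 0)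
    (hHA : IsHNFOf HA A) (hHB : IsHNFOf HB B) :
    (GRel G A B ↔ GRel G HA HB) ∧
    (GRel G A B ↔ ∃ g ∈ G, IsHNFOf HA (B.submatrix id ⇑g)) :=
  stmt10_general G A B HA HB hHA hHB
end

section
/- Let A, B be nonsingular d×d integer matrices and σ_1, σ_2 ∈ S_d such that φ(A·σ_1) = φ(B·σ_2) = (h_1,...,h_d) is sorted with h_1 = ... = h_{m_1} < h_{m_1+1} = ... = h_{m_1+m_2} < ... < h_d, where m_1 + ... + m_s = d. Let S_GCD = σ_2 · S_{(m_1,...,m_s)} · σ_1^{-1}, where S_{(m_1,...,m_s)} is the Young subgroup of S_d preserving the consecutive blocks of sizes m_1,...,m_s. Then A is UP-equivalent to B if and only if there exist U ∈ GL_d(Z) and τ ∈ S_GCD with UA = B·τ. -/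
/-!
Left multiplication by a unimodular matrix `U` preserves every column gcd, since the columns
of `U * M` are integer combinations of the entries of the columns of `M` and vice versa via
`U⁻¹`. Hence `U * A = B ⋅ σ` forces `φ(A)_j = φ(B)_{σ j}`, i.e. `h ∘ (σ₂⁻¹ σ σ₁) = h`; since
`h` strictly increases from one block to the next, `σ₂⁻¹ σ σ₁` must preserve every block.
-/

namespace Matrix

variable {l m n R : Type*} [Fintype m]

def colGcd [CommMonoidWithZero R] [NormalizedGCDMonoid R] (M : Matrix m n R) (j : n) : R :=
  Finset.univ.gcd fun i => M i j

theorem colGcd_submatrix_id [CommMonoidWithZero R] [NormalizedGCDMonoid R] {n' : Type*}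
    (M : Matrix m n R) (e : n' → n) (j : n') : (M.submatrix id e).colGcd j = M.colGcd (e j) :=
  rfl

theorem colGcd_dvd_colGcd_mul [Fintype l] [CommSemiring R] [NormalizedGCDMonoid R]
    (U : Matrix l m R) (M : Matrix m n R) (j : n) : M.colGcd j ∣ (U * M).colGcd j := by
  refine Finset.dvd_gcd fun i _ => ?_
  rw [mul_apply]
  exact Finset.dvd_sum fun k _ => (Finset.gcd_dvd (Finset.mem_univ k)).mul_left _

section CommRing

variable [DecidableEq m] [CommRing R] [IsDomain R] [NormalizedGCDMonoid R] {U : Matrix m m R}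

theorem colGcd_mul_of_isUnit_det (hU : IsUnit U.det) (M : Matrix m n R) (j : n) :
    (U * M).colGcd j = M.colGcd j := by
  refine dvd_antisymm_of_normalize_eq Finset.normalize_gcd Finset.normalize_gcd ?_
    (colGcd_dvd_colGcd_mul U M j)
  simpa only [← Matrix.mul_assoc, nonsing_inv_mul U hU, Matrix.one_mul] using
    colGcd_dvd_colGcd_mul U⁻¹ (U * M) j

theorem colGcd_eq_of_mul_eq_submatrix (hU : IsUnit U.det) {A B : Matrix m n R} {σ : n → n}
    (hUA : U * A = B.submatrix id σ) (j : n) : A.colGcd j = B.colGcd (σ j) := by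
  rw [← colGcd_mul_of_isUnit_det hU A, hUA, colGcd_submatrix_id]

end CommRing

end Matrix

theorem eq_of_lt_imp_lt {ι α β : Type*} [LinearOrder α] [Preorder β] {b : ι → α} {h : ι → β}
    (hstrict : ∀ i j, b i < b j → h i < h j) {i j : ι} (hij : h i = h j) : b i = b j :=
  le_antisymm (not_lt.mp fun hlt => (hstrict j i hlt).ne' hij)
    (not_lt.mp fun hlt => (hstrict i j hlt).ne hij)

theorem stmt19_general {d s : ℕ} (A B : Matrix (Fin d) (Fin d) ℤ)
    (σ₁ σ₂ : Equiv.Perm (Fin d))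
    (b : Fin d → Fin s)
    (h : Fin d → ℤ)
    (hstrict : ∀ i j : Fin d, b i < b j → h i < h j)
    (hφA : ∀ j, (Finset.univ.gcd fun i => (A.submatrix id ⇑σ₁) i j) = h j)
    (hφB : ∀ j, (Finset.univ.gcd fun i => (B.submatrix id ⇑σ₂) i j) = h j) :
    (∃ U : Matrix (Fin d) (Fin d) ℤ, IsUnit U.det ∧
      ∃ σ : Equiv.Perm (Fin d), U * A = B.submatrix id ⇑σ) ↔
    (∃ U : Matrix (Fin d) (Fin d) ℤ, IsUnit U.det ∧
      ∃ τ : Equiv.Perm (Fin d), (∀ x, b ((σ₂⁻¹ * τ * σ₁) x) = b x) ∧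
        U * A = B.submatrix id ⇑τ) := by
  refine ⟨fun ⟨U, hU, σ, hUA⟩ => ⟨U, hU, σ, fun x => eq_of_lt_imp_lt hstrict ?_, hUA⟩,
    fun ⟨U, hU, τ, _, hUA⟩ => ⟨U, hU, τ, hUA⟩⟩
  calc h ((σ₂⁻¹ * σ * σ₁) x)
      = B.colGcd (σ₂ ((σ₂⁻¹ * σ * σ₁) x)) := (hφB _).symm
    _ = B.colGcd (σ (σ₁ x)) := by
      simp only [Equiv.Perm.mul_apply, Equiv.Perm.coe_inv, Equiv.apply_symm_apply]
    _ = A.colGcd (σ₁ x) := (Matrix.colGcd_eq_of_mul_eq_submatrix hU hUA (σ₁ x)).symm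
    _ = h x := hφA x

/-- Suppose the sorted column-gcd vectors of `A ⋅ σ₁` and `B ⋅ σ₂` agree, equal to `h`,
whose blocks of equal values are encoded by the monotone surjection `b` (values are
constant on blocks and strictly increase between blocks).  Let
`S_GCD = σ₂ · S_{(m₁,…,m_s)} · σ₁⁻¹`, where the Young subgroup consists of the
permutations preserving each block of `b`.  Then `A ≃_UP B` iff `U A = B ⋅ τ` for some
unimodular `U` and some `τ ∈ S_GCD`. -/
theorem stmt19 {d s : ℕ} (A B : Matrix (Fin d) (Fin d) ℤ)
    (hA : A.det ≠ 0) (hB : B.det ≠ 0)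
    (σ₁ σ₂ : Equiv.Perm (Fin d))
    (b : Fin d → Fin s) (hbmono : Monotone b) (hbsurj : Function.Surjective b)
    (h : Fin d → ℤ)
    (hconst : ∀ i j : Fin d, b i = b j → h i = h j)
    (hstrict : ∀ i j : Fin d, b i < b j → h i < h j)
    (hφA : ∀ j, (Finset.univ.gcd fun i => (A.submatrix id ⇑σ₁) i j) = h j)
    (hφB : ∀ j, (Finset.univ.gcd fun i => (B.submatrix id ⇑σ₂) i j) = h j) :
    (∃ U : Matrix (Fin d) (Fin d) ℤ, IsUnit U.det ∧
      ∃ σ : Equiv.Perm (Fin d), U * A = B.submatrix id ⇑σ) ↔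
    (∃ U : Matrix (Fin d) (Fin d) ℤ, IsUnit U.det ∧
      ∃ τ : Equiv.Perm (Fin d), (∀ x, b ((σ₂⁻¹ * τ * σ₁) x) = b x) ∧
        U * A = B.submatrix id ⇑τ) :=
  stmt19_general A B σ₁ σ₂ b h hstrict hφA hφB
end
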